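/- With I_{kl}(q) = q_{kl}/SINR_{kl}(q) as above, for every α > 1 and componentwise-positive q, one has I_{kl}(αq) < α I_{kl}(q), i.e., I_{kl} is a scalable (hence standard) interference function. -/

import Mathlib

/-!
The interference function is `1 / (p_{kl} M vᵀ D(q)⁻¹ v)` with `v = β_{kl}` and `D(q)` the
positive definite denominator matrix. Scaling `q` by `α > 1` scales every term of `D` except the
noise constant, so `α D(q) - D(α q)` is a positive diagonal matrix. Since `A ↦ vᵀ A⁻¹ v` is strictly
antitone on positive definite matrices, `vᵀ (α D(q))⁻¹ v < vᵀ D(α q)⁻¹ v`, which is the claim after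
taking reciprocals.
-/

open Matrix Finset

variable {K L : ℕ}

/-- The noise-plus-interference diagonal entries `λ_{jk}(q)`. -/
noncomputable def lamDiag (β : Fin L → Fin K → Fin L → ℝ) (p : Fin K → Fin L → ℝ)
    (k : Fin K) (q : Fin K → Fin L → ℝ) : Fin L → ℝ :=
  fun j => (1 + ∑ i, β j k i * p k i) * (1 + ∑ n, ∑ m, β j m n * q m n)

/-- The denominator matrix `∑_{n≠l} β_{kn} β_{kn}ᴴ p_{kn} q_{kn} M + Λ_k(q)`. -/
noncomputable def denomMat (β : Fin L → Fin K → Fin L → ℝ) (p : Fin K → Fin L → ℝ)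
    (M : ℝ) (k : Fin K) (l : Fin L) (q : Fin K → Fin L → ℝ) :
    Matrix (Fin L) (Fin L) ℝ :=
  ∑ n ∈ univ.erase l,
    (p k n * q k n * M) • vecMulVec (fun j => β j k n) (fun j => β j k n) +
  diagonal (lamDiag β p k q)

/-- The interference function `I_{kl}(q) = q_{kl}/SINR_{kl}(q)
  = 1/(p_{kl} M · β_{kl}ᴴ (denomMat q)⁻¹ β_{kl})`. -/
noncomputable def interfFun (β : Fin L → Fin K → Fin L → ℝ) (p : Fin K → Fin L → ℝ)
    (M : ℝ) (k : Fin K) (l : Fin L) (q : Fin K → Fin L → ℝ) : ℝ :=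
  1 / (p k l * M *
    ((fun j => β j k l) ⬝ᵥ (denomMat β p M k l q)⁻¹ *ᵥ (fun j => β j k l)))

namespace Matrix

variable {n : Type*} [Fintype n] {A B : Matrix n n ℝ}

lemma IsHermitian.dotProduct_mulVec_comm (hA : A.IsHermitian) (u w : n → ℝ) :
    u ⬝ᵥ A *ᵥ w = w ⬝ᵥ A *ᵥ u := by
  rw [dotProduct_mulVec, ← mulVec_transpose, ← conjTranspose_eq_transpose_of_trivial, hA.eq,
    dotProduct_comm]

variable [DecidableEq n]

lemma PosDef.mulVec_inv_mulVec (hA : A.PosDef) (v : n → ℝ) : A *ᵥ (A⁻¹ *ᵥ v) = v := by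
  rw [mulVec_mulVec, mul_nonsing_inv _ ((isUnit_iff_isUnit_det _).1 hA.isUnit), one_mulVec]

/-- Variational form of `vᵀ A⁻¹ v`: the maximum of `2 vᵀx - xᵀAx`, attained at `x = A⁻¹ v`. -/
lemma PosDef.two_mul_dotProduct_sub_le (hA : A.PosDef) (v x : n → ℝ) :
    2 * (v ⬝ᵥ x) - x ⬝ᵥ A *ᵥ x ≤ v ⬝ᵥ A⁻¹ *ᵥ v := by
  set y := A⁻¹ *ᵥ v
  have hy : A *ᵥ y = v := hA.mulVec_inv_mulVec v
  have hsq : 0 ≤ (y - x) ⬝ᵥ A *ᵥ (y - x) := by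
    simpa using hA.posSemidef.dotProduct_mulVec_nonneg (y - x)
  have hcross : y ⬝ᵥ A *ᵥ x = v ⬝ᵥ x := by
    rw [hA.isHermitian.dotProduct_mulVec_comm, hy, dotProduct_comm]
  rw [mulVec_sub, hy, dotProduct_sub, sub_dotProduct, sub_dotProduct, hcross, dotProduct_comm y v,
    dotProduct_comm x v] at hsq
  linarith

lemma PosDef.dotProduct_inv_mulVec_lt (hA : A.PosDef) (hBA : (B - A).PosDef) {v : n → ℝ}
    (hv : v ≠ 0) : v ⬝ᵥ B⁻¹ *ᵥ v < v ⬝ᵥ A⁻¹ *ᵥ v := by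
  have hB : B.PosDef := by simpa using hA.add hBA
  set x := B⁻¹ *ᵥ v
  have hx : B *ᵥ x = v := hB.mulVec_inv_mulVec v
  have hx0 : x ≠ 0 := fun h => hv (by rw [← hx, h, mulVec_zero])
  have hgap : 0 < x ⬝ᵥ B *ᵥ x - x ⬝ᵥ A *ᵥ x := by
    simpa [sub_mulVec, dotProduct_sub] using hBA.dotProduct_mulVec_pos hx0
  have hvx : v ⬝ᵥ x = x ⬝ᵥ B *ᵥ x := by rw [hx, dotProduct_comm]
  calc v ⬝ᵥ B⁻¹ *ᵥ v = 2 * (v ⬝ᵥ x) - x ⬝ᵥ B *ᵥ x := by rw [← hvx]; ring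
    _ < 2 * (v ⬝ᵥ x) - x ⬝ᵥ A *ᵥ x := by linarith
    _ ≤ v ⬝ᵥ A⁻¹ *ᵥ v := hA.two_mul_dotProduct_sub_le v x

end Matrix

section Interference

variable {β : Fin L → Fin K → Fin L → ℝ} {p : Fin K → Fin L → ℝ}

lemma lamDiag_pos (hβ : ∀ j m n, 0 ≤ β j m n) (hp : ∀ m n, 0 ≤ p m n) (k : Fin K)
    {q : Fin K → Fin L → ℝ} (hq : ∀ m n, 0 ≤ q m n) (j : Fin L) :
    0 < lamDiag β p k q j := by
  have hβp : 0 ≤ ∑ i, β j k i * p k i := sum_nonneg fun i _ => mul_nonneg (hβ _ _ _) (hp _ _)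
  have hβq : 0 ≤ ∑ n, ∑ m, β j m n * q m n :=
    sum_nonneg fun n _ => sum_nonneg fun m _ => mul_nonneg (hβ _ _ _) (hq _ _)
  unfold lamDiag
  positivity

lemma denomMat_posDef (hβ : ∀ j m n, 0 ≤ β j m n) (hp : ∀ m n, 0 ≤ p m n) {M : ℝ} (hM : 0 ≤ M)
    (k : Fin K) (l : Fin L) {q : Fin K → Fin L → ℝ} (hq : ∀ m n, 0 ≤ q m n) :
    (denomMat β p M k l q).PosDef := by
  refine PosDef.posSemidef_add (posSemidef_sum _ fun n _ => ?_)
    (PosDef.diagonal (lamDiag_pos hβ hp k hq))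
  simpa using (posSemidef_vecMulVec_self_star fun j => β j k n).smul
    (mul_nonneg (mul_nonneg (hp k n) (hq k n)) hM)

/-- Only the noise constant `1` in `λ_{jk}` escapes the scaling of `q`. -/
lemma smul_denomMat_sub_denomMat_smul (M : ℝ) (k : Fin K) (l : Fin L) (q : Fin K → Fin L → ℝ)
    (α : ℝ) :
    α • denomMat β p M k l q - denomMat β p M k l (α • q)
      = diagonal fun j => (α - 1) * (1 + ∑ i, β j k i * p k i) := by
  have hrank : α • ∑ n ∈ univ.erase l,
        (p k n * q k n * M) • vecMulVec (fun j => β j k n) (fun j => β j k n)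
      = ∑ n ∈ univ.erase l,
        (p k n * (α • q) k n * M) • vecMulVec (fun j => β j k n) (fun j => β j k n) := by
    rw [smul_sum]
    refine sum_congr rfl fun n _ => ?_
    rw [smul_smul, Pi.smul_apply, Pi.smul_apply, smul_eq_mul]
    congr 1
    ring
  have hnoise : ∀ j, ∑ n, ∑ m, β j m n * (α • q) m n = α * ∑ n, ∑ m, β j m n * q m n := by
    intro j
    simp only [Pi.smul_apply, smul_eq_mul, mul_sum, mul_left_comm]
  rw [denomMat, denomMat, smul_add, hrank, add_sub_add_left_eq_sub, ← diagonal_smul,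
    diagonal_sub]
  congr 1
  funext j
  rw [Pi.smul_apply, smul_eq_mul]
  simp only [lamDiag, hnoise]
  ring

lemma smul_denomMat_sub_denomMat_smul_posDef (hβ : ∀ j m n, 0 ≤ β j m n)
    (hp : ∀ m n, 0 ≤ p m n) (M : ℝ) (k : Fin K) (l : Fin L) (q : Fin K → Fin L → ℝ) {α : ℝ}
    (hα : 1 < α) : (α • denomMat β p M k l q - denomMat β p M k l (α • q)).PosDef := by
  rw [smul_denomMat_sub_denomMat_smul]
  exact PosDef.diagonal fun j => mul_pos (sub_pos.2 hα)
    (add_pos_of_pos_of_nonneg one_pos (sum_nonneg fun i _ => mul_nonneg (hβ _ _ _) (hp _ _)))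

lemma dotProduct_inv_denomMat_lt (hβ : ∀ j m n, 0 ≤ β j m n) (hp : ∀ m n, 0 ≤ p m n) {M : ℝ}
    (hM : 0 ≤ M) (k : Fin K) (l : Fin L) {q : Fin K → Fin L → ℝ} (hq : ∀ m n, 0 ≤ q m n)
    {α : ℝ} (hα : 1 < α) {v : Fin L → ℝ} (hv : v ≠ 0) :
    v ⬝ᵥ (denomMat β p M k l q)⁻¹ *ᵥ v < α * (v ⬝ᵥ (denomMat β p M k l (α • q))⁻¹ *ᵥ v) := by
  have hα0 : 0 < α := one_pos.trans hα
  have hD := denomMat_posDef hβ hp hM k l hq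
  have hDα := denomMat_posDef hβ hp hM k l (q := α • q) fun m n => mul_nonneg hα0.le (hq m n)
  have hinv : (α • denomMat β p M k l q)⁻¹ = α⁻¹ • (denomMat β p M k l q)⁻¹ :=
    inv_eq_left_inv (by
      simp [smul_smul, hα0.ne', nonsing_inv_mul _ ((isUnit_iff_isUnit_det _).1 hD.isUnit)])
  have key := hDα.dotProduct_inv_mulVec_lt
    (smul_denomMat_sub_denomMat_smul_posDef hβ hp M k l q hα) hv
  rw [hinv, smul_mulVec, dotProduct_smul, smul_eq_mul] at key
  exact (inv_mul_lt_iff₀ hα0).1 key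

end Interference

/-- Scalability of `I_{kl}`: for every `α > 1` and componentwise-positive `q`,
`I_{kl}(α q) < α I_{kl}(q)`; hence `I_{kl}` is a standard interference function. -/
theorem stmt_15 (β : Fin L → Fin K → Fin L → ℝ) (hβ : ∀ j m n, 0 < β j m n)
    (p : Fin K → Fin L → ℝ) (hp : ∀ m n, 0 < p m n) (M : ℝ) (hM : 0 < M)
    (k : Fin K) (l : Fin L) :
    ∀ α : ℝ, 1 < α → ∀ q : Fin K → Fin L → ℝ, (∀ m n, 0 < q m n) →
      interfFun β p M k l (α • q) < α * interfFun β p M k l q := by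
  intro α hα q hq
  have hq' : ∀ m n, 0 ≤ q m n := fun m n => (hq m n).le
  have hβ' : ∀ j m n, 0 ≤ β j m n := fun j m n => (hβ j m n).le
  have hp' : ∀ m n, 0 ≤ p m n := fun m n => (hp m n).le
  unfold interfFun
  set v : Fin L → ℝ := fun j => β j k l
  have hv : v ≠ 0 := fun h => (hβ l k l).ne' (congrFun h l)
  have hX : 0 < v ⬝ᵥ (denomMat β p M k l q)⁻¹ *ᵥ v := by
    simpa using (denomMat_posDef hβ' hp' hM.le k l hq').inv.dotProduct_mulVec_pos hv
  have key := dotProduct_inv_denomMat_lt hβ' hp' hM.le k l hq' hα hv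
  have hXα : 0 < v ⬝ᵥ (denomMat β p M k l (α • q))⁻¹ *ᵥ v :=
    pos_of_mul_pos_right (hX.trans key) (by linarith)
  have hpM : 0 < p k l * M := mul_pos (hp k l) hM
  rw [mul_one_div, div_lt_div_iff₀ (by positivity) (by positivity)]
  linear_combination (p k l * M) * key
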